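/- Let A be an associative algebra over a commutative ring in which 2 is invertible, and let R : A → A be a linear map satisfying the associative Yang–Baxter equation R(X)·R(Y) − R(R(X)·Y + X·R(Y)) + X·Y = 0 for all X, Y ∈ A. Then the bilinear product X ∗ Y := (1/2)(R(X)·Y + X·R(Y)) is associative, and its commutator reproduces the R-bracket of the commutator Lie algebra of A: X ∗ Y − Y ∗ X = (1/2)([R(X),Y] + [X,R(Y)]), where [X,Y] := X·Y − Y·X. -/

import Mathlib

/-- The product `X ∗ Y = (1/2)(R(X)·Y + X·R(Y))` associated to a linear map `R` on an
associative (not necessarily unital) algebra. -/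
def aybeStar {k : Type*} [CommRing k] [Invertible (2 : k)]
    {A : Type*} [NonUnitalRing A] [Module k A] [SMulCommClass k A A] [IsScalarTower k A A]
    (R : A →ₗ[k] A) (X Y : A) : A :=
  (⅟(2 : k)) • (R X * Y + X * R Y)

/-!
Applying `R` to `X ∗ Y` gives, by the Yang–Baxter equation, `½(R(X)·R(Y) + X·Y)`. Substituting
this into both `(X ∗ Y) ∗ Z` and `X ∗ (Y ∗ Z)` turns each into
`¼(R(X)·R(Y)·Z + X·Y·Z + R(X)·Y·R(Z) + X·R(Y)·R(Z))`, by associativity of `A`.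
-/

section

variable {k : Type*} [CommRing k] {A : Type*} [NonUnitalRing A] [Module k A]

def IsAYBESolution (R : A →ₗ[k] A) : Prop :=
  ∀ X Y : A, R X * R Y - R (R X * Y + X * R Y) + X * Y = 0

theorem IsAYBESolution.map_mul_add_mul {R : A →ₗ[k] A} (hR : IsAYBESolution R) (X Y : A) :
    R (R X * Y + X * R Y) = R X * R Y + X * Y := by
  have h := hR X Y
  rwa [sub_add_eq_add_sub, sub_eq_zero, eq_comm] at h

variable [Invertible (2 : k)] [SMulCommClass k A A] [IsScalarTower k A A]

theorem IsAYBESolution.map_aybeStar {R : A →ₗ[k] A} (hR : IsAYBESolution R) (X Y : A) :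
    R (aybeStar R X Y) = (⅟(2 : k)) • (R X * R Y + X * Y) := by
  rw [aybeStar, map_smul, hR.map_mul_add_mul]

theorem IsAYBESolution.aybeStar_assoc {R : A →ₗ[k] A} (hR : IsAYBESolution R) (X Y Z : A) :
    aybeStar R (aybeStar R X Y) Z = aybeStar R X (aybeStar R Y Z) := by
  rw [aybeStar, hR.map_aybeStar, aybeStar, aybeStar, hR.map_aybeStar, aybeStar]
  simp only [smul_mul_assoc, mul_smul_comm, mul_add, add_mul, smul_add, mul_assoc]
  abel

theorem aybeStar_sub_aybeStar (R : A →ₗ[k] A) (X Y : A) :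
    aybeStar R X Y - aybeStar R Y X
      = (⅟(2 : k)) • ((R X * Y - Y * R X) + (X * R Y - R Y * X)) := by
  rw [aybeStar, aybeStar, ← smul_sub]
  congr 1
  abel

end

/-- If `R` solves the associative Yang–Baxter equation, then `X ∗ Y = (1/2)(R(X)·Y + X·R(Y))`
is an associative product whose commutator is the `R`-bracket of the commutator Lie algebra:
`X ∗ Y − Y ∗ X = (1/2)([R(X),Y] + [X,R(Y)])`. -/
theorem statement6 {k : Type*} [CommRing k] [Invertible (2 : k)]
    {A : Type*} [NonUnitalRing A] [Module k A] [SMulCommClass k A A] [IsScalarTower k A A]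
    (R : A →ₗ[k] A)
    (hR : ∀ X Y : A, R X * R Y - R (R X * Y + X * R Y) + X * Y = 0) :
    (∀ X Y Z : A, aybeStar R (aybeStar R X Y) Z = aybeStar R X (aybeStar R Y Z)) ∧
    (∀ X Y : A,
      aybeStar R X Y - aybeStar R Y X
        = (⅟(2 : k)) • ((R X * Y - Y * R X) + (X * R Y - R Y * X))) :=
  ⟨IsAYBESolution.aybeStar_assoc hR, aybeStar_sub_aybeStar R⟩
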